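/- For 0\le t\le \min(l,m), the sum over subsets satisfies \sum_{1\le i_1<\cdots<i_t\le l} q^{m(i_1-1)+(m-1)(i_2-i_1-1)+\cdots+(m-t+1)(i_t-i_{t-1}-1)+(m-t)(l-i_t)} = q^{(m-t)(l-t)} \binom{l}{t}_q. -/

import Mathlib

/-- `(q)_k = (1-q)(1-q^2)⋯(1-q^k)` -/
def qPoch (q : ℝ) (k : ℕ) : ℝ := ∏ i ∈ Finset.range k, (1 - q ^ (i + 1))

/-- Gaussian (q-)binomial coefficient `[n choose k]_q = (q)_n / ((q)_k (q)_{n-k})`. -/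
noncomputable def qBinom (q : ℝ) (n k : ℕ) : ℝ := qPoch q n / (qPoch q k * qPoch q (n - k))

/-- The extended chain `0 = i_0 < i_1 < ⋯ < i_t < i_{t+1} = l+1`, where
`i_1 < ⋯ < i_t` is the increasing enumeration of the `t`-element subset `A ⊆ {1,…,l}`. -/
def chainExt (l t : ℕ) (A : Finset ℕ) (j : ℕ) : ℕ :=
  if j = 0 then 0
  else if j ≤ t then (Finset.sort A (· ≤ ·)).getD (j - 1) 0
  else l + 1

/-- The exponent `m(i_1-1) + (m-1)(i_2-i_1-1) + ⋯ + (m-t+1)(i_t-i_{t-1}-1) + (m-t)(l-i_t)`. -/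
def ampExp (m t l : ℕ) (A : Finset ℕ) : ℕ :=
  ∑ r ∈ Finset.range (t + 1),
    (m - r) * (chainExt l t A (r + 1) - chainExt l t A r - 1)

open Finset

/-! ### Auxiliary lemmas -/

/-- `auxT t = 1 + 2 + ⋯ + t`. -/
def auxT (t : ℕ) : ℕ := ∑ r ∈ Finset.range t, (r + 1)

lemma auxT_succ (t : ℕ) : auxT (t + 1) = auxT t + (t + 1) := Finset.sum_range_succ _ t

lemma auxT_two (t : ℕ) : 2 * auxT t = t * (t + 1) := by
  induction t with
  | zero => simp [auxT]
  | succ n ih => rw [auxT_succ, Nat.mul_add, ih]; ring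

lemma one_sub_pow_ne_zero {q : ℝ} (hq : |q| < 1) (k : ℕ) : (1 : ℝ) - q ^ (k + 1) ≠ 0 := by
  have h : |q ^ (k + 1)| < 1 := by
    rw [abs_pow]
    exact pow_lt_one₀ (abs_nonneg q) hq (Nat.succ_ne_zero k)
  intro h0
  have : q ^ (k + 1) = 1 := by linarith [sub_eq_zero.mp (by linarith : (1:ℝ) - q ^ (k+1) = 0)]
  rw [this] at h; simp at h

lemma qPoch_ne_zero {q : ℝ} (hq : |q| < 1) (k : ℕ) : qPoch q k ≠ 0 := by
  unfold qPoch
  exact Finset.prod_ne_zero_iff.2 fun i _ => one_sub_pow_ne_zero hq i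

lemma qPoch_succ (q : ℝ) (n : ℕ) : qPoch q (n + 1) = qPoch q n * (1 - q ^ (n + 1)) :=
  Finset.prod_range_succ _ n

lemma qPoch_zero (q : ℝ) : qPoch q 0 = 1 := Finset.prod_range_zero _

lemma qBinom_zero {q : ℝ} (hq : |q| < 1) (n : ℕ) : qBinom q n 0 = 1 := by
  unfold qBinom
  rw [qPoch_zero, Nat.sub_zero, one_mul, div_self (qPoch_ne_zero hq n)]

lemma qBinom_self {q : ℝ} (hq : |q| < 1) (n : ℕ) : qBinom q n n = 1 := by
  unfold qBinom
  rw [Nat.sub_self, qPoch_zero, mul_one, div_self (qPoch_ne_zero hq n)]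

lemma qBinom_pascal {q : ℝ} (hq : |q| < 1) (k b : ℕ) :
    qBinom q (k + b + 2) (k + 1)
      = qBinom q (k + b + 1) (k + 1) + q ^ (b + 1) * qBinom q (k + b + 1) k := by
  unfold qBinom
  have h1 : k + b + 2 - (k + 1) = b + 1 := by omega
  have h2 : k + b + 1 - (k + 1) = b := by omega
  have h3 : k + b + 1 - k = b + 1 := by omega
  rw [h1, h2, h3]
  have e1 : qPoch q (k + b + 2) = qPoch q (k + b + 1) * (1 - q ^ (k + b + 2)) :=
    qPoch_succ q (k + b + 1)
  have e2 : qPoch q (k + 1) = qPoch q k * (1 - q ^ (k + 1)) := qPoch_succ q k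
  have e3 : qPoch q (b + 1) = qPoch q b * (1 - q ^ (b + 1)) := qPoch_succ q b
  rw [e1, e2, e3]
  have hk := qPoch_ne_zero hq k
  have hb := qPoch_ne_zero hq b
  have hk1 := one_sub_pow_ne_zero hq k
  have hb1 := one_sub_pow_ne_zero hq b
  field_simp
  ring

/-- Lower bound: the sum of a subset of `Icc 1 l` is at least `auxT` of its card. -/
lemma sum_lb : ∀ (l : ℕ) (A : Finset ℕ), A ⊆ Finset.Icc 1 l → auxT A.card ≤ ∑ j ∈ A, j := by
  intro l
  induction l with
  | zero =>
    intro A hA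
    have : A = ∅ := by
      apply Finset.subset_empty.mp
      simpa using hA
    simp [this, auxT]
  | succ l ih =>
    intro A hA
    by_cases h : l + 1 ∈ A
    · set A' := A.erase (l + 1) with hA'
      have hsub : A' ⊆ Finset.Icc 1 l := by
        intro x hx
        have hx1 := Finset.mem_of_mem_erase hx
        have hxne := Finset.ne_of_mem_erase hx
        have := hA hx1
        simp only [Finset.mem_Icc] at this ⊢
        omega
      have hcard : A'.card + 1 = A.card := by
        rw [hA', Finset.card_erase_of_mem h]
        have : 1 ≤ A.card := Finset.card_pos.mpr ⟨_, h⟩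
        omega
      have hsum : ∑ j ∈ A, j = (l + 1) + ∑ j ∈ A', j := by
        rw [hA', ← Finset.add_sum_erase _ _ h]
      have hcardle : A.card ≤ l + 1 := by
        calc A.card ≤ (Finset.Icc 1 (l + 1)).card := Finset.card_le_card hA
          _ = l + 1 := by rw [Nat.card_Icc]; omega
      have hih := ih A' hsub
      rw [hsum, ← hcard, auxT_succ]
      omega
    · have hsub : A ⊆ Finset.Icc 1 l := by
        intro x hx
        have := hA hx
        simp only [Finset.mem_Icc] at this ⊢
        have : x ≠ l + 1 := fun he => h (he ▸ hx)
        omega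
      exact ih A hsub

lemma sum_getD : ∀ (L : List ℕ), ∑ r ∈ Finset.range L.length, L.getD r 0 = L.sum := by
  intro L
  induction L with
  | nil => simp
  | cons a L ih =>
    rw [List.length_cons, Finset.sum_range_succ']
    simp only [List.getD_cons_succ, List.getD_cons_zero, List.sum_cons, ih]
    omega

lemma sort_sum (A : Finset ℕ) : (Finset.sort A (· ≤ ·)).sum = ∑ j ∈ A, j := by
  have h := (Finset.sort_perm_toList A (· ≤ ·)).sum_eq
  have h2 := Finset.sum_map_toList A id
  rw [List.map_id] at h2
  rw [h, h2]
  rfl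

lemma getD_lt_of_lt (L : List ℕ) (hs : L.Pairwise (· < ·)) {i j : ℕ}
    (hij : i < j) (hj : j < L.length) : L.getD i 0 < L.getD j 0 := by
  have hi : i < L.length := hij.trans hj
  rw [List.getD_eq_getElem?_getD, List.getD_eq_getElem?_getD,
    List.getElem?_eq_getElem hi, List.getElem?_eq_getElem hj]
  exact hs.rel_get_of_lt (a := ⟨i, hi⟩) (b := ⟨j, hj⟩) hij

lemma getD_mem (L : List ℕ) {j : ℕ} (hj : j < L.length) : L.getD j 0 ∈ L := by
  rw [List.getD_eq_getElem?_getD, List.getElem?_eq_getElem hj]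
  exact List.getElem_mem hj

/-- ℤ-valued telescoping identity. -/
lemma tele (M : ℤ) (f : ℕ → ℤ) : ∀ t : ℕ,
    ∑ r ∈ Finset.range (t + 1), (M - r) * (f (r + 1) - f r - 1)
      = (M - t) * f (t + 1) - M * f 0 + (∑ r ∈ Finset.range t, f (r + 1))
        - ∑ r ∈ Finset.range (t + 1), (M - r) := by
  intro t
  induction t with
  | zero => simp; ring
  | succ n ih =>
    rw [Finset.sum_range_succ _ (n + 1), ih, Finset.sum_range_succ (fun r => f (r + 1)) n,
      Finset.sum_range_succ (fun r => M - (r : ℤ)) (n + 1)]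
    push_cast
    ring

lemma sumM (M : ℤ) : ∀ t : ℕ, ∑ r ∈ Finset.range (t + 1), (M - (r : ℤ)) = (t + 1) * M - (auxT t : ℤ) := by
  intro t
  induction t with
  | zero => simp [auxT]
  | succ n ih =>
    rw [Finset.sum_range_succ, ih, auxT_succ]
    push_cast
    ring

section Chain

variable {l t : ℕ} {A : Finset ℕ}

lemma chainExt_zero : chainExt l t A 0 = 0 := by simp [chainExt]

lemma chainExt_top : chainExt l t A (t + 1) = l + 1 := by
  simp [chainExt]

lemma chainExt_mid {j : ℕ} (hj : j < t) :
    chainExt l t A (j + 1) = (Finset.sort A (· ≤ ·)).getD j 0 := by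
  simp [chainExt, Nat.succ_le_of_lt hj]

lemma chainExt_mid_mem (hA : A ⊆ Finset.Icc 1 l) (hcard : A.card = t) {j : ℕ} (hj : j < t) :
    chainExt l t A (j + 1) ∈ Finset.Icc 1 l := by
  rw [chainExt_mid hj]
  have hlen : j < (Finset.sort A (· ≤ ·)).length := by
    rw [Finset.length_sort, hcard]; exact hj
  exact hA ((Finset.mem_sort _).1 (getD_mem _ hlen))

lemma chainExt_strict (hA : A ⊆ Finset.Icc 1 l) (hcard : A.card = t) :
    ∀ r ≤ t, chainExt l t A r < chainExt l t A (r + 1) := by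
  intro r hr
  rcases Nat.eq_zero_or_pos r with rfl | hrpos
  · rw [chainExt_zero]
    rcases Nat.eq_zero_or_pos t with rfl | htpos
    · rw [chainExt_top]; omega
    · have := chainExt_mid_mem hA hcard (j := 0) htpos
      rw [Finset.mem_Icc] at this
      omega
  · obtain ⟨r', rfl⟩ : ∃ r', r = r' + 1 := ⟨r - 1, by omega⟩
    have hr' : r' < t := by omega
    rcases eq_or_lt_of_le hr with heq | hlt
    · -- r' + 1 = t
      have := chainExt_mid_mem hA hcard hr'
      rw [Finset.mem_Icc] at this
      have h2 : r' + 1 + 1 = t + 1 := by omega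
      rw [h2, chainExt_top]
      omega
    · have hr1 : r' + 1 < t := hlt
      rw [chainExt_mid hr', chainExt_mid hr1]
      apply getD_lt_of_lt _ (Finset.sortedLT_sort A).pairwise (Nat.lt_succ_self r')
      rw [Finset.length_sort, hcard]; exact hr1

lemma chainExt_sum (hcard : A.card = t) :
    ∑ r ∈ Finset.range t, chainExt l t A (r + 1) = ∑ j ∈ A, j := by
  rw [Finset.sum_congr rfl (fun r hr => chainExt_mid (Finset.mem_range.mp hr))]
  have hlen : (Finset.sort A (· ≤ ·)).length = t := by rw [Finset.length_sort, hcard]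
  rw [← hlen, sum_getD, sort_sum]

end Chain

lemma ampExp_eq (m t l : ℕ) (htm : t ≤ m) (htl : t ≤ l) (A : Finset ℕ)
    (hA : A ∈ Finset.powersetCard t (Finset.Icc 1 l)) :
    ampExp m t l A = (m - t) * (l - t) + ((∑ j ∈ A, j) - auxT t) := by
  obtain ⟨hsub, hcard⟩ := Finset.mem_powersetCard.1 hA
  have hmono := chainExt_strict hsub hcard
  have hbd : auxT t ≤ ∑ j ∈ A, j := by
    have := sum_lb l A hsub
    rwa [hcard] at this
  have key : (ampExp m t l A : ℤ) = ((m : ℤ) - t) * ((l : ℤ) - t)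
      + (((∑ j ∈ A, j : ℕ) : ℤ) - (auxT t : ℤ)) := by
    unfold ampExp
    rw [Nat.cast_sum]
    have hc : ∀ r ∈ Finset.range (t + 1),
        (((m - r) * (chainExt l t A (r + 1) - chainExt l t A r - 1) : ℕ) : ℤ)
          = ((m : ℤ) - r) * ((chainExt l t A (r + 1) : ℤ) - (chainExt l t A r : ℤ) - 1) := by
      intro r hr
      have hr' : r ≤ t := by
        have := Finset.mem_range.mp hr; omega
      have h1 := hmono r hr'
      have hrm : r ≤ m := hr'.trans htm
      push_cast [Nat.cast_sub hrm, Nat.cast_sub (by omega : chainExt l t A r ≤ chainExt l t A (r+1)),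
        Nat.cast_sub (by omega : 1 ≤ chainExt l t A (r+1) - chainExt l t A r)]
      ring
    rw [Finset.sum_congr rfl hc, tele ((m : ℤ)) (fun r => (chainExt l t A r : ℤ)) t]
    rw [chainExt_zero, chainExt_top]
    have hS : (∑ r ∈ Finset.range t, ((chainExt l t A (r + 1) : ℤ))) = ((∑ j ∈ A, j : ℕ) : ℤ) := by
      rw [← Nat.cast_sum]
      norm_cast
      exact chainExt_sum hcard
    rw [hS, sumM]
    have h2T : (2 * auxT t : ℤ) = (t : ℤ) * ((t : ℤ) + 1) := by
      have := auxT_two t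
      exact_mod_cast congrArg (Nat.cast : ℕ → ℤ) this
    push_cast
    push_cast at h2T
    linear_combination h2T
  have hfinal : (ampExp m t l A : ℤ)
      = (((m - t) * (l - t) + ((∑ j ∈ A, j) - auxT t) : ℕ) : ℤ) := by
    rw [key]
    push_cast [Nat.cast_sub htm, Nat.cast_sub htl, Nat.cast_sub hbd]
    ring
  exact_mod_cast hfinal

lemma sum_Icc_auxT : ∀ n : ℕ, ∑ j ∈ Finset.Icc 1 n, j = auxT n := by
  intro n
  induction n with
  | zero => simp [auxT]
  | succ n ih =>
    rw [← Finset.insert_Icc_right_eq_Icc_add_one (by omega : 1 ≤ n + 1),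
      Finset.sum_insert (by simp), ih, auxT_succ]
    omega

lemma qsum (q : ℝ) (hq : |q| < 1) : ∀ l t : ℕ, t ≤ l →
    ∑ A ∈ Finset.powersetCard t (Finset.Icc 1 l), q ^ ((∑ j ∈ A, j) - auxT t) = qBinom q l t := by
  intro l
  induction l with
  | zero =>
    intro t ht
    interval_cases t
    rw [qBinom_zero hq]
    simp [auxT]
  | succ l ih =>
    intro t ht
    rcases Nat.eq_zero_or_pos t with rfl | htpos
    · rw [Finset.powersetCard_zero, qBinom_zero hq]
      simp [auxT]
    · obtain ⟨t', rfl⟩ : ∃ t', t = t' + 1 := ⟨t - 1, by omega⟩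
      rcases eq_or_lt_of_le ht with heq | hlt
      · -- t' + 1 = l + 1
        have hc : (Finset.Icc 1 (l + 1)).card = l + 1 := by rw [Nat.card_Icc]; omega
        have hps := Finset.powersetCard_self (Finset.Icc 1 (l + 1))
        rw [hc] at hps
        rw [heq, hps]
        rw [Finset.sum_singleton, sum_Icc_auxT, Nat.sub_self, pow_zero, qBinom_self hq]
      · -- t' + 1 ≤ l
        have htl : t' + 1 ≤ l := by omega
        obtain ⟨b, rfl⟩ : ∃ b, l = t' + b + 1 := ⟨l - t' - 1, by omega⟩
        have hnot : (t' + b + 1 + 1) ∉ Finset.Icc 1 (t' + b + 1) := by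
          simp
        rw [show Finset.Icc 1 (t' + b + 1 + 1)
            = insert (t' + b + 1 + 1) (Finset.Icc 1 (t' + b + 1)) from
          (Finset.insert_Icc_right_eq_Icc_add_one (by omega)).symm]
        rw [Finset.powersetCard_succ_insert hnot]
        have hdisj : Disjoint (Finset.powersetCard (t' + 1) (Finset.Icc 1 (t' + b + 1)))
            ((Finset.powersetCard t' (Finset.Icc 1 (t' + b + 1))).image
              (insert (t' + b + 1 + 1))) := by
          rw [Finset.disjoint_left]
          intro A hA hA'
          obtain ⟨hsub, _⟩ := Finset.mem_powersetCard.1 hA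
          obtain ⟨B, _, rfl⟩ := Finset.mem_image.1 hA'
          exact hnot (hsub (Finset.mem_insert_self _ _))
        rw [Finset.sum_union hdisj]
        have hinj : ∀ A ∈ Finset.powersetCard t' (Finset.Icc 1 (t' + b + 1)),
            ∀ B ∈ Finset.powersetCard t' (Finset.Icc 1 (t' + b + 1)),
            insert (t' + b + 1 + 1) A = insert (t' + b + 1 + 1) B → A = B := by
          intro A hA B hB hAB
          obtain ⟨hsubA, _⟩ := Finset.mem_powersetCard.1 hA
          obtain ⟨hsubB, _⟩ := Finset.mem_powersetCard.1 hB
          have hnA : (t' + b + 1 + 1) ∉ A := fun h => hnot (hsubA h)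
          have hnB : (t' + b + 1 + 1) ∉ B := fun h => hnot (hsubB h)
          rw [← Finset.erase_insert hnA, ← Finset.erase_insert hnB, hAB]
        rw [Finset.sum_image hinj]
        have hterm : ∀ A ∈ Finset.powersetCard t' (Finset.Icc 1 (t' + b + 1)),
            q ^ ((∑ j ∈ insert (t' + b + 1 + 1) A, j) - auxT (t' + 1))
              = q ^ (b + 1) * q ^ ((∑ j ∈ A, j) - auxT t') := by
          intro A hA
          obtain ⟨hsubA, hcardA⟩ := Finset.mem_powersetCard.1 hA
          have hnA : (t' + b + 1 + 1) ∉ A := fun h => hnot (hsubA h)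
          rw [Finset.sum_insert hnA, ← pow_add]
          congr 1
          have hbdA : auxT t' ≤ ∑ j ∈ A, j := by
            have := sum_lb (t' + b + 1) A hsubA
            rwa [hcardA] at this
          rw [auxT_succ]
          omega
        rw [Finset.sum_congr rfl hterm, ← Finset.mul_sum]
        rw [ih (t' + 1) htl, ih t' (by omega)]
        exact (qBinom_pascal hq t' b).symm

theorem stmt_9 (q : ℝ) (hq : |q| < 1) (m t l : ℕ) (htm : t ≤ m) (htl : t ≤ l) :
    ∑ A ∈ Finset.powersetCard t (Finset.Icc 1 l), q ^ ampExp m t l A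
      = q ^ ((m - t) * (l - t)) * qBinom q l t := by
  have h1 : ∀ A ∈ Finset.powersetCard t (Finset.Icc 1 l),
      q ^ ampExp m t l A = q ^ ((m - t) * (l - t)) * q ^ ((∑ j ∈ A, j) - auxT t) := by
    intro A hA
    rw [ampExp_eq m t l htm htl A hA, pow_add]
  rw [Finset.sum_congr rfl h1, ← Finset.mul_sum, qsum q hq l t htl]
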